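/- Fix U ≥ 2 and let ψ : (0,∞) → [0,1] be a smooth compactly supported function that is constant outside (0, 1/U] ∪ [1 - 1/U, 1 + 1/U] and satisfies sup|ψ''| ≤ C₀U² for some constant C₀. Then there is a constant C (depending only on C₀ and an upper bound on the support of ψ) such that for all σ ∈ [1/2, 2] and all t with |t| ≥ U, the Mellin transform Ψ(σ+it) = ∫₀^∞ ψ(y)y^{σ+it-1}dy satisfies |Ψ(σ+it)| ≤ C·U/t². -/

import Mathlib

open MeasureTheory Set Real Filter
open scoped ContDiff

set_option maxHeartbeats 1600000 in
/-- There is C = C(C₀, b) such that for every U ≥ 2 and every smooth ψ : ℝ → [0,1]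
with compact support in [0,b], constant outside (0,1/U] ∪ [1-1/U,1+1/U], and
sup|ψ''| ≤ C₀U², the Mellin transform satisfies |Ψ(σ+it)| ≤ C·U/t²
for 1/2 ≤ σ ≤ 2 and |t| ≥ U. -/
theorem stmt9 (C₀ b : ℝ) (hC₀ : 0 < C₀) (hb : 0 < b) :
    ∃ C : ℝ, 0 < C ∧ ∀ U : ℝ, 2 ≤ U → ∀ ψ : ℝ → ℝ,
      ContDiff ℝ (⊤ : ℕ∞) ψ → HasCompactSupport ψ →
      (∀ y, ψ y ∈ Set.Icc (0:ℝ) 1) →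
      tsupport ψ ⊆ Set.Icc 0 b →
      (∀ y, y ∉ Set.Ioc 0 (1/U) ∪ Set.Icc (1 - 1/U) (1 + 1/U) → deriv ψ y = 0) →
      (∀ y, |deriv (deriv ψ) y| ≤ C₀ * U^2) →
      ∀ σ t : ℝ, 1/2 ≤ σ → σ ≤ 2 → U ≤ |t| →
        ‖(∫ y in Set.Ioi (0:ℝ),
            (ψ y : ℂ) * (y : ℂ) ^ ((σ : ℂ) + t * Complex.I - 1))‖ ≤
          C * U / t^2 := by
  refine ⟨24 * C₀ + 1, by positivity, ?_⟩
  intro U hU ψ hsm hcs hmem hsupp hd1 hd2 σ t hσ1 hσ2 ht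
  have hU0 : (0:ℝ) < U := by linarith
  have ht2 : (2:ℝ) ≤ |t| := le_trans hU ht
  have ht0 : t ≠ 0 := by
    intro h; rw [h, abs_zero] at ht2; linarith
  have hUhalf : 1/U ≤ 1/2 := by
    apply one_div_le_one_div_of_le <;> linarith
  have hU0' : 0 < 1/U := by positivity
  set s : ℂ := (σ:ℂ) + (t:ℂ) * Complex.I with hs_def
  have hs_re : s.re = σ := by simp [hs_def]
  have hs_im : s.im = t := by simp [hs_def]
  have hs1_re : (s + 1).re = σ + 1 := by simp [hs_def]
  have hsm1_re : (s - 1).re = σ - 1 := by simp [hs_def]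
  have hs0 : s ≠ 0 := by
    intro h
    have : s.im = 0 := by rw [h]; simp
    rw [hs_im] at this; exact ht0 this
  have hs1 : s + 1 ≠ 0 := by
    intro h
    have : (s+1).im = 0 := by rw [h]; simp
    simp [hs_im] at this; exact ht0 this
  have hsm1 : s - 1 ≠ -1 := by
    intro h; exact hs0 (by linear_combination h)
  have hsne1 : s ≠ -1 := by
    intro h; exact hs1 (by linear_combination h)
  have habs_s : |t| ≤ ‖s‖ := by
    have := Complex.abs_im_le_norm s
    rwa [hs_im] at this
  have habs_s1 : |t| ≤ ‖s + 1‖ := by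
    have := Complex.abs_im_le_norm (s + 1)
    simp only [Complex.add_im, Complex.one_im, add_zero, hs_im] at this
    exact this
  have habs_s_pos : 0 < ‖s‖ := lt_of_lt_of_le (by linarith) habs_s
  have habs_s1_pos : 0 < ‖s+1‖ := lt_of_lt_of_le (by linarith) habs_s1
  have habs_s_ge1 : 1 ≤ ‖s‖ := le_trans (by linarith) habs_s
  have habs_s1_ge1 : 1 ≤ ‖s+1‖ := le_trans (by linarith) habs_s1
  -- smoothness facts
  have hsmI : ContDiff ℝ ∞ ψ := hsm.of_le (by simp)
  have hψdiff : Differentiable ℝ ψ := (contDiff_infty_iff_deriv.mp hsmI).1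
  have hsm' : ContDiff ℝ ∞ (deriv ψ) := (contDiff_infty_iff_deriv.mp hsmI).2
  have hψ'diff : Differentiable ℝ (deriv ψ) := (contDiff_infty_iff_deriv.mp hsm').1
  have hψc : Continuous ψ := hsm.continuous
  have hψ'c : Continuous (deriv ψ) := hsm'.continuous
  have hψ''c : Continuous (deriv (deriv ψ)) := (contDiff_infty_iff_deriv.mp hsm').2.continuous
  have hcs' : HasCompactSupport (deriv ψ) := hcs.deriv
  obtain ⟨M, hM⟩ := hcs'.exists_bound_of_continuous hψ'c
  have hM0 : 0 ≤ M := le_trans (norm_nonneg _) (hM 0)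
  have hM' : ∀ x, |deriv ψ x| ≤ M := fun x => by rw [← Real.norm_eq_abs]; exact hM x
  have hψ1 : ∀ y, |ψ y| ≤ 1 := fun y =>
    abs_le.mpr ⟨by linarith [(hmem y).1], (hmem y).2⟩
  have hψ0 : ∀ y : ℝ, y ∉ Set.Icc (0:ℝ) b → ψ y = 0 := fun y hy =>
    image_eq_zero_of_notMem_tsupport (fun h => hy (hsupp h))
  have hψ'0 : ∀ y : ℝ, y ∉ Set.Icc (0:ℝ) b → deriv ψ y = 0 := by
    intro y hy
    by_contra h
    exact hy (hsupp (support_deriv_subset (Function.mem_support.mpr h)))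
  -- the exceptional set
  set E : Set ℝ := Set.Ioc 0 (1/U) ∪ Set.Icc (1 - 1/U) (1 + 1/U) with hE_def
  have hEmeas : MeasurableSet E := measurableSet_Ioc.union measurableSet_Icc
  have hEpos : ∀ y ∈ E, 0 < y ∧ y ≤ 2 := by
    intro y hy
    rcases hy with h | h
    · exact ⟨h.1, by linarith [h.2]⟩
    · exact ⟨by linarith [h.1], by linarith [h.2]⟩
  -- second derivative vanishes off E on the positive axis
  have hd2zero : ∀ y : ℝ, 0 < y → y ∉ E → deriv (deriv ψ) y = 0 := by
    intro y hy hyE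
    have hy1 : 1/U < y := by
      by_contra h; push_neg at h; exact hyE (Or.inl ⟨hy, h⟩)
    have hnicc : y ∉ Set.Icc (1 - 1/U) (1 + 1/U) := fun h => hyE (Or.inr h)
    rw [Set.mem_Icc, not_and_or, not_le, not_le] at hnicc
    have hev : deriv ψ =ᶠ[nhds y] (fun _ => (0:ℝ)) := by
      rcases hnicc with h | h
      · filter_upwards [Ioo_mem_nhds hy1 h] with z hz
        refine hd1 z ?_
        rintro (hz' | hz')
        · exact absurd hz'.2 (not_le.mpr hz.1)
        · exact absurd hz'.1 (not_le.mpr hz.2)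
      · filter_upwards [Ioi_mem_nhds h] with z hz
        refine hd1 z ?_
        rintro (hz' | hz')
        · have : z ≤ 1/U := hz'.2
          have : (1:ℝ) + 1/U < z := hz
          linarith
        · have : z ≤ 1 + 1/U := hz'.2
          have : (1:ℝ) + 1/U < z := hz
          linarith
    rw [hev.deriv_eq, deriv_const]
  have hEvol : volume E < ⊤ :=
    lt_of_le_of_lt (measure_union_le _ _)
      (ENNReal.add_lt_top.mpr ⟨measure_Ioc_lt_top, measure_Icc_lt_top⟩)
  have hvolE : (volume (Set.Ioi (0:ℝ) ∩ E)).toReal ≤ 3 / U := by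
    refine ENNReal.toReal_le_of_le_ofReal (by positivity) ?_
    refine le_trans (measure_mono Set.inter_subset_right) ?_
    refine le_trans (measure_union_le _ _) ?_
    rw [Real.volume_Ioc, Real.volume_Icc]
    rw [← ENNReal.ofReal_add (by linarith) (by linarith)]
    apply ENNReal.ofReal_le_ofReal
    have : (1:ℝ) + 1/U - (1 - 1/U) = 2/U := by ring
    rw [this]
    have : (1:ℝ)/U - 0 + 2/U = 3/U := by ring
    rw [this]
  -- rpow bound on E
  have hrpowE : ∀ y ∈ E, ∀ c : ℝ, 0 ≤ c → c ≤ 3 → y ^ c ≤ 8 := by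
    intro y hy c hc0 hc3
    obtain ⟨hy0, hy2⟩ := hEpos y hy
    calc y ^ c ≤ 2 ^ c := Real.rpow_le_rpow hy0.le hy2 hc0
    _ ≤ 2 ^ (3:ℝ) := Real.rpow_le_rpow_of_exponent_le one_le_two hc3
    _ = 8 := by
        rw [show (3:ℝ) = ((3:ℕ):ℝ) by norm_num, Real.rpow_natCast]; norm_num
  -- continuity facts for cpow
  have hcpowOn : ∀ c : ℂ, ContinuousOn (fun y : ℝ => (y:ℂ) ^ c) (Set.Ioi (0:ℝ)) :=
    fun c y hy => (Complex.continuousAt_ofReal_cpow_const y c (Or.inr (ne_of_gt hy))).continuousWithinAt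
  have hnormcpow : ∀ (y : ℝ), 0 < y → ∀ c : ℂ, ‖(y:ℂ) ^ c‖ = y ^ c.re := by
    intro y hy c
    rw [Complex.norm_cpow_eq_rpow_re_of_pos hy]
  -- the four integrands
  set A : ℝ → ℂ := fun y => (ψ y : ℂ) * (y:ℂ) ^ (s - 1) with hA_def
  set B : ℝ → ℂ := fun y => Complex.ofReal (deriv ψ y) * ((y:ℂ) ^ s / s) with hB_def
  set Cf : ℝ → ℂ := fun y => Complex.ofReal (deriv ψ y) * (y:ℂ) ^ s with hC_def
  set D : ℝ → ℂ := fun y => Complex.ofReal (deriv (deriv ψ) y) * ((y:ℂ) ^ (s+1) / (s+1)) with hD_def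
  -- measurability
  have hmeasA : AEStronglyMeasurable A (volume.restrict (Set.Ioi (0:ℝ))) :=
    (((Complex.continuous_ofReal.comp hψc).continuousOn).mul (hcpowOn (s-1))).aestronglyMeasurable
      measurableSet_Ioi
  have hmeasB : AEStronglyMeasurable B (volume.restrict (Set.Ioi (0:ℝ))) :=
    (((Complex.continuous_ofReal.comp hψ'c).continuousOn).mul
      ((hcpowOn s).div_const s)).aestronglyMeasurable measurableSet_Ioi
  have hmeasC : AEStronglyMeasurable Cf (volume.restrict (Set.Ioi (0:ℝ))) :=
    (((Complex.continuous_ofReal.comp hψ'c).continuousOn).mul (hcpowOn s)).aestronglyMeasurable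
      measurableSet_Ioi
  have hmeasD : AEStronglyMeasurable D (volume.restrict (Set.Ioi (0:ℝ))) :=
    (((Complex.continuous_ofReal.comp hψ''c).continuousOn).mul
      ((hcpowOn (s+1)).div_const (s+1))).aestronglyMeasurable measurableSet_Ioi
  -- domination helper
  have hdom : ∀ (f : ℝ → ℂ) (g : ℝ → ℝ),
      AEStronglyMeasurable f (volume.restrict (Set.Ioi (0:ℝ))) →
      Integrable g →
      (∀ y ∈ Set.Ioi (0:ℝ), ‖f y‖ ≤ g y) → IntegrableOn f (Set.Ioi (0:ℝ)) := by
    intro f g hf hg hbound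
    exact Integrable.mono' hg.integrableOn hf
      ((ae_restrict_iff' measurableSet_Ioi).2 (Filter.Eventually.of_forall hbound))
  -- integrable dominating functions
  have hG1int : Integrable ((Set.Ioc (0:ℝ) b).indicator (fun y => (1 + M * b) * y ^ (σ - 1))) := by
    rw [integrable_indicator_iff measurableSet_Ioc]
    have := (intervalIntegral.intervalIntegrable_rpow' (show (-1:ℝ) < σ - 1 by linarith)
      (a := 0) (b := b)).const_mul (1 + M * b)
    exact (intervalIntegrable_iff_integrableOn_Ioc_of_le hb.le).mp this
  have hGEint : ∀ c : ℝ, Integrable (E.indicator (fun _ => c)) := by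
    intro c
    rw [integrable_indicator_iff hEmeas]
    exact (integrableOn_const_iff).mpr (Or.inr hEvol)
  -- bounds and integrability for A, B
  have hboundA : ∀ y ∈ Set.Ioi (0:ℝ),
      ‖A y‖ ≤ (Set.Ioc (0:ℝ) b).indicator (fun y => (1 + M * b) * y ^ (σ - 1)) y := by
    intro y hy
    have hy0 : (0:ℝ) < y := hy
    by_cases hyb : y ≤ b
    · rw [Set.indicator_of_mem (Set.mem_Ioc.mpr ⟨hy0, hyb⟩)]
      rw [hA_def]
      simp only [norm_mul, Complex.norm_real, Real.norm_eq_abs]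
      rw [hnormcpow y hy0, hsm1_re]
      have h1 : |ψ y| ≤ 1 := hψ1 y
      have h2 : (0:ℝ) ≤ y ^ (σ - 1) := Real.rpow_nonneg hy0.le _
      nlinarith [mul_le_mul_of_nonneg_right h1 h2, mul_nonneg (mul_nonneg hM0 hb.le) h2]
    · rw [Set.indicator_of_notMem (fun h => hyb h.2)]
      have : ψ y = 0 := hψ0 y (fun h => hyb h.2)
      simp [hA_def, this]
  have hboundB : ∀ y ∈ Set.Ioi (0:ℝ),
      ‖B y‖ ≤ (Set.Ioc (0:ℝ) b).indicator (fun y => (1 + M * b) * y ^ (σ - 1)) y := by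
    intro y hy
    have hy0 : (0:ℝ) < y := hy
    by_cases hyb : y ≤ b
    · rw [Set.indicator_of_mem (Set.mem_Ioc.mpr ⟨hy0, hyb⟩)]
      rw [hB_def]
      simp only [norm_mul, Complex.norm_real, norm_div, Real.norm_eq_abs]
      rw [hnormcpow y hy0, hs_re]
      have h1 : |deriv ψ y| ≤ M := hM' y
      have h2 : y ^ σ = y ^ (σ - 1) * y := by
        rw [← Real.rpow_add_one (ne_of_gt hy0)]; ring_nf
      have h3 : (0:ℝ) ≤ y ^ (σ - 1) := Real.rpow_nonneg hy0.le _
      have h4 : y ^ σ ≤ y ^ (σ - 1) * b := by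
        rw [h2]; exact mul_le_mul_of_nonneg_left hyb h3
      have h5 : y ^ σ / ‖s‖ ≤ y ^ σ :=
        div_le_self (Real.rpow_nonneg hy0.le _) habs_s_ge1
      have h6 : |deriv ψ y| * (y ^ σ / ‖s‖) ≤ M * (y ^ (σ - 1) * b) := by
        apply mul_le_mul h1 (le_trans h5 h4) (by positivity) hM0
      calc |deriv ψ y| * (y ^ σ / ‖s‖) ≤ M * (y ^ (σ - 1) * b) := h6
      _ ≤ (1 + M * b) * y ^ (σ - 1) := by nlinarith
    · rw [Set.indicator_of_notMem (fun h => hyb h.2)]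
      have : deriv ψ y = 0 := hψ'0 y (fun h => hyb h.2)
      simp [hB_def, this]
  have hAint : IntegrableOn A (Set.Ioi (0:ℝ)) := hdom A _ hmeasA hG1int hboundA
  have hBint : IntegrableOn B (Set.Ioi (0:ℝ)) := hdom B _ hmeasB hG1int hboundB
  -- bounds and integrability for C, D
  have hboundC : ∀ y ∈ Set.Ioi (0:ℝ), ‖Cf y‖ ≤ E.indicator (fun _ => M * 8) y := by
    intro y hy
    have hy0 : (0:ℝ) < y := hy
    by_cases hyE : y ∈ E
    · rw [Set.indicator_of_mem hyE]
      rw [hC_def]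
      simp only [norm_mul, Complex.norm_real, Real.norm_eq_abs]
      rw [hnormcpow y hy0, hs_re]
      exact mul_le_mul (hM' y) (hrpowE y hyE σ (by linarith) (by linarith))
        (Real.rpow_nonneg hy0.le _) hM0
    · have : deriv ψ y = 0 := hd1 y hyE
      rw [Set.indicator_of_notMem hyE]
      simp [hC_def, this]
  have hboundD : ∀ y ∈ Set.Ioi (0:ℝ),
      ‖D y‖ ≤ E.indicator (fun _ => C₀ * U^2 * 8 / ‖s+1‖) y := by
    intro y hy
    have hy0 : (0:ℝ) < y := hy
    by_cases hyE : y ∈ E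
    · rw [Set.indicator_of_mem hyE]
      rw [hD_def]
      simp only [norm_mul, Complex.norm_real, norm_div, Real.norm_eq_abs]
      rw [hnormcpow y hy0, hs1_re, ← mul_div_assoc]
      have h2 : y ^ (σ+1) ≤ 8 := hrpowE y hyE (σ+1) (by linarith) (by linarith)
      have h3 : (0:ℝ) ≤ y ^ (σ+1) := Real.rpow_nonneg hy0.le _
      rw [div_le_div_iff₀ habs_s1_pos habs_s1_pos, mul_comm (C₀ * U ^ 2 * 8),
        mul_comm _ (‖s+1‖)]
      exact mul_le_mul_of_nonneg_left (mul_le_mul (hd2 y) h2 h3 (by positivity))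
        habs_s1_pos.le
    · have : deriv (deriv ψ) y = 0 := hd2zero y hy0 hyE
      rw [Set.indicator_of_notMem hyE]
      simp [hD_def, this]
  have hCint : IntegrableOn Cf (Set.Ioi (0:ℝ)) := hdom Cf _ hmeasC (hGEint _) hboundC
  have hDint : IntegrableOn D (Set.Ioi (0:ℝ)) := hdom D _ hmeasD (hGEint _) hboundD
  -- first integration by parts
  have hF1deriv : ∀ x ∈ Set.Ioi (0:ℝ),
      HasDerivAt (fun y : ℝ => (ψ y : ℂ) * ((y:ℂ) ^ s / s)) (B x + A x) x := by
    intro x hx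
    have hx0 : (0:ℝ) < x := hx
    have h1 : HasDerivAt (fun y : ℝ => ((y:ℂ) ^ s / s)) ((x:ℂ) ^ (s-1)) x := by
      have := hasDerivAt_ofReal_cpow_const' (ne_of_gt hx0) hsm1
      simpa [sub_add_cancel] using this
    have h2 : HasDerivAt (fun y : ℝ => ((ψ y : ℝ) : ℂ)) (Complex.ofReal (deriv ψ x)) x :=
      ((hψdiff x).hasDerivAt).ofReal_comp
    exact h2.mul h1
  have hcont1 : ContinuousWithinAt (fun y : ℝ => (ψ y : ℂ) * ((y:ℂ) ^ s / s))
      (Set.Ici (0:ℝ)) 0 := by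
    apply Continuous.continuousWithinAt
    exact (Complex.continuous_ofReal.comp hψc).mul
      ((Complex.continuous_ofReal_cpow_const (by rw [hs_re]; linarith)).div_const s)
  have htop1 : Tendsto (fun y : ℝ => (ψ y : ℂ) * ((y:ℂ) ^ s / s)) atTop (nhds 0) := by
    have hev : (fun y : ℝ => (ψ y : ℂ) * ((y:ℂ) ^ s / s)) =ᶠ[atTop] (fun _ => (0:ℂ)) := by
      filter_upwards [Filter.eventually_gt_atTop b] with y hy
      rw [hψ0 y (fun h => absurd h.2 (not_le.mpr hy))]
      simp
    exact Tendsto.congr' hev.symm tendsto_const_nhds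
  have hIBP1 : (∫ y in Set.Ioi (0:ℝ), (B y + A y)) = 0 := by
    rw [integral_Ioi_of_hasDerivAt_of_tendsto hcont1 hF1deriv (hBint.add hAint) htop1]
    simp [Complex.ofReal_zero, Complex.zero_cpow hs0]
  -- second integration by parts
  have hF2deriv : ∀ x ∈ Set.Ioi (0:ℝ),
      HasDerivAt (fun y : ℝ => Complex.ofReal (deriv ψ y) * ((y:ℂ) ^ (s+1) / (s+1)))
        (D x + Cf x) x := by
    intro x hx
    have hx0 : (0:ℝ) < x := hx
    have h1 : HasDerivAt (fun y : ℝ => ((y:ℂ) ^ (s+1) / (s+1))) ((x:ℂ) ^ s) x :=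
      hasDerivAt_ofReal_cpow_const' (ne_of_gt hx0) hsne1
    have h2 : HasDerivAt (fun y : ℝ => ((deriv ψ y : ℝ) : ℂ))
        (Complex.ofReal (deriv (deriv ψ) x)) x :=
      ((hψ'diff x).hasDerivAt).ofReal_comp
    exact h2.mul h1
  have hcont2 : ContinuousWithinAt
      (fun y : ℝ => Complex.ofReal (deriv ψ y) * ((y:ℂ) ^ (s+1) / (s+1)))
      (Set.Ici (0:ℝ)) 0 := by
    apply Continuous.continuousWithinAt
    exact (Complex.continuous_ofReal.comp hψ'c).mul
      ((Complex.continuous_ofReal_cpow_const (by rw [hs1_re]; linarith)).div_const (s+1))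
  have htop2 : Tendsto (fun y : ℝ => Complex.ofReal (deriv ψ y) * ((y:ℂ) ^ (s+1) / (s+1)))
      atTop (nhds 0) := by
    have hev : (fun y : ℝ => Complex.ofReal (deriv ψ y) * ((y:ℂ) ^ (s+1) / (s+1)))
        =ᶠ[atTop] (fun _ => (0:ℂ)) := by
      filter_upwards [Filter.eventually_gt_atTop b] with y hy
      rw [hψ'0 y (fun h => absurd h.2 (not_le.mpr hy))]
      simp
    exact Tendsto.congr' hev.symm tendsto_const_nhds
  have hIBP2 : (∫ y in Set.Ioi (0:ℝ), (D y + Cf y)) = 0 := by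
    rw [integral_Ioi_of_hasDerivAt_of_tendsto hcont2 hF2deriv (hDint.add hCint) htop2]
    simp [Complex.ofReal_zero, Complex.zero_cpow hs1]
  -- combine
  have hkey : (∫ y in Set.Ioi (0:ℝ), A y) = (∫ y in Set.Ioi (0:ℝ), D y) / s := by
    have e1 : (∫ y in Set.Ioi (0:ℝ), B y) + (∫ y in Set.Ioi (0:ℝ), A y) = 0 := by
      rw [← integral_add hBint hAint]; exact hIBP1
    have e2 : (∫ y in Set.Ioi (0:ℝ), D y) + (∫ y in Set.Ioi (0:ℝ), Cf y) = 0 := by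
      rw [← integral_add hDint hCint]; exact hIBP2
    have e3 : (∫ y in Set.Ioi (0:ℝ), B y) = (∫ y in Set.Ioi (0:ℝ), Cf y) / s := by
      rw [← integral_div]
      congr 1
      funext y
      rw [hB_def, hC_def]
      simp [mul_div_assoc]
    linear_combination e1 - e3 - e2 / s
  -- bound on the D-integral
  have hDbound : ‖∫ y in Set.Ioi (0:ℝ), D y‖
      ≤ 24 * C₀ * U / ‖s+1‖ := by
    refine le_trans (norm_integral_le_integral_norm _) ?_
    have step : (∫ y in Set.Ioi (0:ℝ), ‖D y‖)
        ≤ ∫ y in Set.Ioi (0:ℝ), E.indicator (fun _ => C₀ * U^2 * 8 / ‖s+1‖) y :=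
      setIntegral_mono_on hDint.norm (hGEint _).integrableOn measurableSet_Ioi hboundD
    refine le_trans step ?_
    rw [setIntegral_indicator hEmeas, setIntegral_const, smul_eq_mul]
    have h8 : (0:ℝ) ≤ C₀ * U^2 * 8 / ‖s+1‖ := by positivity
    calc (volume (Set.Ioi 0 ∩ E)).toReal * (C₀ * U^2 * 8 / ‖s+1‖)
        ≤ (3 / U) * (C₀ * U^2 * 8 / ‖s+1‖) :=
          mul_le_mul_of_nonneg_right hvolE h8
      _ = 24 * C₀ * U / ‖s+1‖ := by
          field_simp
          ring
  -- final estimate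
  have ht2pos : (0:ℝ) < t^2 := by positivity
  have hts : t^2 ≤ ‖s+1‖ * ‖s‖ := by
    have htt : t^2 = |t| * |t| := by rw [abs_mul_abs_self]; ring
    rw [htt]
    exact mul_le_mul habs_s1 habs_s (abs_nonneg t) habs_s1_pos.le
  calc ‖∫ y in Set.Ioi (0:ℝ), A y‖
      = ‖∫ y in Set.Ioi (0:ℝ), D y‖ / ‖s‖ := by
        rw [hkey, norm_div]
    _ ≤ (24 * C₀ * U / ‖s+1‖) / ‖s‖ := by
        gcongr
    _ = 24 * C₀ * U / (‖s+1‖ * ‖s‖) := by rw [div_div]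
    _ ≤ 24 * C₀ * U / t^2 := by
        gcongr
    _ ≤ (24 * C₀ + 1) * U / t^2 := by
        gcongr
        nlinarith
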